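/- Assume ε ∈ {1,−1}, ξ ∉ {0, 1/6}, εξ(1−6ξ) > 0, and let λ* ∈ ℝ satisfy z(λ*)² = 1/(6εξ(1−6ξ)). Let x* ∈ ℝ be any root of g(x) = ε(1−4ξ−w_m)x² + 4εξ(1−3w_m)z(λ*)·x + 2ξ(1−3w_m)/(1−6ξ). Then F(x*, 0, λ*) = (0,0,0), i.e. the point 3a (radiation-dominated epoch generated by non-minimal coupling) is an equilibrium of the system. -/

import Mathlib

open Polynomial Filter

/-- The factor `D(λ) = 1 − 6εξ(1−6ξ)z(λ)²` coming from the time reparametrization. -/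
noncomputable def Dfun (ε ξ : ℝ) (z : ℝ → ℝ) (l : ℝ) : ℝ :=
  1 - 6*ε*ξ*(1-6*ξ)*(z l)^2

/-- The common bracket
`B(x,y,λ) = −4/3 − 2ξλy²z(λ) + ε(1−6ξ)(1−w_m)x² + 2εξ(1−3w_m)(x+z(λ))² + (1+w_m)(1−y²)`. -/
noncomputable def Bfun (ε ξ wm : ℝ) (z : ℝ → ℝ) (x y l : ℝ) : ℝ :=
  -4/3 - 2*ξ*l*y^2*(z l) + ε*(1-6*ξ)*(1-wm)*x^2
    + 2*ε*ξ*(1-3*wm)*(x + z l)^2 + (1+wm)*(1-y^2)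

/-- First component of the vector field:
`f₁ = −(x − (ε/2)λy²)·D(λ) + (3/2)(x + 6ξz(λ))·B(x,y,λ)`. -/
noncomputable def f1 (ε ξ wm : ℝ) (z : ℝ → ℝ) (x y l : ℝ) : ℝ :=
  -(x - ε/2*l*y^2) * Dfun ε ξ z l + 3/2*(x + 6*ξ*(z l)) * Bfun ε ξ wm z x y l

/-- Second component: `f₂ = y(2 − (1/2)λx)·D(λ) + (3/2)y·B(x,y,λ)`. -/
noncomputable def f2 (ε ξ wm : ℝ) (z : ℝ → ℝ) (x y l : ℝ) : ℝ :=
  y*(2 - 1/2*l*x) * Dfun ε ξ z l + 3/2*y * Bfun ε ξ wm z x y l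

/-- Third component: `f₃ = x·D(λ)/z′(λ)`. -/
noncomputable def f3 (ε ξ : ℝ) (z : ℝ → ℝ) (x y l : ℝ) : ℝ :=
  x * Dfun ε ξ z l / deriv z l

/-- The full vector field `F(x,y,λ) = (f₁,f₂,f₃)` of the reduced cosmological system. -/
noncomputable def Fvec (ε ξ wm : ℝ) (z : ℝ → ℝ) (x y l : ℝ) : ℝ × ℝ × ℝ :=
  (f1 ε ξ wm z x y l, f2 ε ξ wm z x y l, f3 ε ξ z x y l)

/-- The effective equation-of-state parameter `w_eff(x,y,λ)`. -/
noncomputable def weff (ε ξ wm : ℝ) (z : ℝ → ℝ) (x y l : ℝ) : ℝ :=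
  (Dfun ε ξ z l)⁻¹ *
    (-1 + ε*(1-6*ξ)*(1-wm)*x^2 + 2*ε*ξ*(1-3*wm)*(x + z l)^2
      + (1+wm)*(1-y^2) - 2*ε*ξ*(1-6*ξ)*(z l)^2 - 2*ξ*l*y^2*(z l))

/-- The Jacobian matrix `J_{ij} = ∂f_i/∂(j-th variable)` of `F` at the point `(x,y,λ)`. -/
noncomputable def Jmat (ε ξ wm : ℝ) (z : ℝ → ℝ) (x y l : ℝ) :
    Matrix (Fin 3) (Fin 3) ℝ :=
  Matrix.of
    ![![deriv (fun t => f1 ε ξ wm z t y l) x,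
        deriv (fun t => f1 ε ξ wm z x t l) y,
        deriv (fun t => f1 ε ξ wm z x y t) l],
      ![deriv (fun t => f2 ε ξ wm z t y l) x,
        deriv (fun t => f2 ε ξ wm z x t l) y,
        deriv (fun t => f2 ε ξ wm z x y t) l],
      ![deriv (fun t => f3 ε ξ z t y l) x,
        deriv (fun t => f3 ε ξ z x t l) y,
        deriv (fun t => f3 ε ξ z x y t) l]]

/-- The quadratic `g` of the paper, with `zs` standing for `z(λ*)`. -/
noncomputable def radiation3aPoly (ε ξ wm zs x : ℝ) : ℝ :=
  ε*(1-4*ξ-wm)*x^2 + 4*ε*ξ*(1-3*wm)*zs*x + 2*ξ*(1-3*wm)/(1-6*ξ)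

section

variable {ε ξ wm : ℝ} {z : ℝ → ℝ} {x l : ℝ}

theorem Dfun_eq_zero_of_sq_eq (hne : 6*ε*ξ*(1-6*ξ) ≠ 0)
    (hl : (z l)^2 = 1/(6*ε*ξ*(1-6*ξ))) : Dfun ε ξ z l = 0 := by
  rw [Dfun, hl, mul_one_div_cancel hne, sub_self]

/-- The `z(λ)²` term of `B` is traded for `D` via `6εξ(1−6ξ)z(λ)² = 1 − D(λ)`. -/
theorem Bfun_zero_eq (h6 : 1-6*ξ ≠ 0) :
    Bfun ε ξ wm z x 0 l =
      radiation3aPoly ε ξ wm (z l) x - (1-3*wm)/(1-6*ξ)/3 * Dfun ε ξ z l := by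
  rw [Bfun, radiation3aPoly, Dfun]
  linear_combination (1-3*wm)/3*(1-6*ε*ξ*(z l)^2) * mul_inv_cancel₀ h6

theorem Fvec_eq_zero_of_Dfun_eq_zero_of_Bfun_eq_zero (hD : Dfun ε ξ z l = 0)
    (hB : Bfun ε ξ wm z x 0 l = 0) : Fvec ε ξ wm z x 0 l = (0, 0, 0) := by
  simp [Fvec, f1, f2, f3, hD, hB]

end

theorem radiation3a_point_is_equilibrium_general (ε ξ wm : ℝ) (z : ℝ → ℝ) (lstar xstar : ℝ)
    (hsign : 0 < ε*ξ*(1-6*ξ))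
    (hl : (z lstar)^2 = 1/(6*ε*ξ*(1-6*ξ)))
    (hroot : ε*(1-4*ξ-wm)*xstar^2 + 4*ε*ξ*(1-3*wm)*(z lstar)*xstar
      + 2*ξ*(1-3*wm)/(1-6*ξ) = 0) :
    Fvec ε ξ wm z xstar 0 lstar = (0, 0, 0) := by
  have hne : 6*ε*ξ*(1-6*ξ) ≠ 0 := (by linarith : 0 < 6*ε*ξ*(1-6*ξ)).ne'
  have h6 : 1-6*ξ ≠ 0 := fun h => by simp [h] at hsign
  have hD : Dfun ε ξ z lstar = 0 := Dfun_eq_zero_of_sq_eq hne hl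
  refine Fvec_eq_zero_of_Dfun_eq_zero_of_Bfun_eq_zero hD ?_
  rw [Bfun_zero_eq h6, hD, mul_zero, sub_zero]
  exact hroot

/-- The point 3a (radiation-dominated epoch generated by non-minimal
coupling): any root `x*` of
`g(x) = ε(1−4ξ−w_m)x² + 4εξ(1−3w_m)z(λ*)x + 2ξ(1−3w_m)/(1−6ξ)`,
with `y* = 0` and `z(λ*)² = 1/(6εξ(1−6ξ))`, is an equilibrium of the system. -/
theorem radiation3a_point_is_equilibrium (ε ξ wm : ℝ) (z : ℝ → ℝ) (lstar xstar : ℝ)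
    (hε : ε = 1 ∨ ε = -1) (hξ0 : ξ ≠ 0) (hξ6 : ξ ≠ 1/6)
    (hsign : 0 < ε*ξ*(1-6*ξ))
    (hz : DifferentiableAt ℝ z lstar) (hz' : deriv z lstar ≠ 0)
    (hl : (z lstar)^2 = 1/(6*ε*ξ*(1-6*ξ)))
    (hroot : ε*(1-4*ξ-wm)*xstar^2 + 4*ε*ξ*(1-3*wm)*(z lstar)*xstar
      + 2*ξ*(1-3*wm)/(1-6*ξ) = 0) :
    Fvec ε ξ wm z xstar 0 lstar = (0, 0, 0) :=
  radiation3a_point_is_equilibrium_general ε ξ wm z lstar xstar hsign hl hroot
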